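/- Let g₀ : ℝⁿ → ℝ and g : ℝⁿ → ℝᵐ be twice continuously differentiable, L(q₁,q₂) := g₀(q₁) + ⟨q₂, g(q₁)⟩. Suppose q₁ : ℝ → ℝⁿ and q₂ : ℝ → ℝᵐ are differentiable and satisfy the Arrow–Hurwicz–Uzawa flow: q₁'(t) = −∇_{q₁}L(q₁(t), q₂(t)) and q₂'(t) = g(q₁(t)) for all t. Define q₃(t) := −∇_{q₁}L(q₁(t), q₂(t)) and q₄(t) := g(q₁(t)). Then q₃ and q₄ are differentiable and satisfy (q₃'(t), q₄'(t)) = −K_A(q₁(t), q₂(t))ᵀ · (q₃(t), q₄(t)) for all t, where K_A(q₁,q₂) := [[∂²_{q₁}L(q₁,q₂), −[Dg(q₁)]ᵀ],[Dg(q₁), 0]] is the asymmetric KKT matrix. -/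

import Mathlib

open scoped RealInnerProductSpace

/-
Along the flow, `q₃ = -G(q₁, q₂)` with `G(x, y) = ∇g₀(x) + Dg(x)ᵀ y` affine in `y`, so the chain
rule gives `q₃' = -∂ₓG · q₁' - Dg(q₁)ᵀ q₂'`; substituting the flow `q₁' = q₃`, `q₂' = q₄` yields
the residual equations, and `q₄' = Dg(q₁) q₁' = Dg(q₁) q₃` is the chain rule for `g ∘ q₁`.
-/

section AffineFamily

variable {𝕜 E F G : Type*} [NontriviallyNormedField 𝕜]
  [NormedAddCommGroup E] [NormedSpace 𝕜 E] [NormedAddCommGroup F] [NormedSpace 𝕜 F]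
  [NormedAddCommGroup G] [NormedSpace 𝕜 G]

theorem HasDerivAt.add_clm_apply_comp {a : E → G} {B : E → F →L[𝕜] G} {c : 𝕜 → E} {d : 𝕜 → F}
    {c' : E} {d' : F} {t : 𝕜} (ha : DifferentiableAt 𝕜 a (c t))
    (hB : DifferentiableAt 𝕜 B (c t)) (hc : HasDerivAt c c' t) (hd : HasDerivAt d d' t) :
    HasDerivAt (fun s => a (c s) + B (c s) (d s))
      (fderiv 𝕜 (fun x => a x + B x (d t)) (c t) c' + B (c t) d') t := by
  have hfrozen : HasDerivAt (fun s => a (c s) + B (c s) (d t))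
      (fderiv 𝕜 (fun x => a x + B x (d t)) (c t) c') t :=
    (ha.add (hB.clm_apply (differentiableAt_const _))).hasFDerivAt.comp_hasDerivAt t hc
  have hincrement : HasDerivAt (fun s => B (c s) (d s - d t)) (B (c t) d') t := by
    simpa using (hB.hasFDerivAt.comp_hasDerivAt t hc).clm_apply (hd.sub_const (d t))
  refine (hfrozen.add hincrement).congr_of_eventuallyEq (Filter.Eventually.of_forall fun s => ?_)
  simp only [Pi.add_apply, map_sub]
  abel

end AffineFamily

section RealAdjoint

variable {E F : Type*} [NormedAddCommGroup E] [InnerProductSpace ℝ E] [CompleteSpace E]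
  [NormedAddCommGroup F] [InnerProductSpace ℝ F] [CompleteSpace F]

/-- Over `ℝ` the conjugate-linear isometry `ContinuousLinearMap.adjoint` is linear. -/
noncomputable def ContinuousLinearMap.adjointRealCLM : (E →L[ℝ] F) →L[ℝ] (F →L[ℝ] E) :=
  LinearMap.mkContinuous
    { toFun := ContinuousLinearMap.adjoint
      map_add' := map_add _
      map_smul' := fun r A => by simp }
    1 (fun A => by simp)

theorem DifferentiableAt.adjoint {X : Type*} [NormedAddCommGroup X] [NormedSpace ℝ X]
    {A : X → E →L[ℝ] F} {x : X} (hA : DifferentiableAt ℝ A x) :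
    DifferentiableAt ℝ (fun x => ContinuousLinearMap.adjoint (A x)) x :=
  (ContinuousLinearMap.adjointRealCLM (E := E) (F := F)).differentiableAt.comp x hA

theorem ContDiff.differentiable_gradient {f : E → ℝ} {n : WithTop ℕ∞} (hf : ContDiff ℝ n f)
    (hn : 2 ≤ n) : Differentiable ℝ (gradient f) :=
  (InnerProductSpace.toDual ℝ E).symm.differentiable.comp
    ((hf.fderiv_right (by simpa [one_add_one_eq_two] using hn)).differentiable one_ne_zero)

end RealAdjoint

/-- **The Arrow–Hurwicz–Uzawa flow drives the optimality residuals by `-K_Aᵀ`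
(Proposition 6.2, Eq. (6.17)).**
For the equality-constrained problem (N₀) with twice continuously differentiable data
`g₀, g` and Lagrangian `L(q₁,q₂) = g₀(q₁) + ⟨q₂, g(q₁)⟩`, suppose `q₁, q₂` obey the
Arrow–Hurwicz–Uzawa flow `q₁' = -∇_{q₁}L(q₁,q₂)`, `q₂' = g(q₁)`. Then the residuals
`q₃ = -∇_{q₁}L(q₁,q₂)` and `q₄ = g(q₁)` are differentiable and satisfy
`(q₃', q₄') = -K_Aᵀ (q₃, q₄)`, where `K_A = [[∂²_{q₁}L, -(Dg)ᵀ],[Dg, 0]]` is the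
asymmetric KKT matrix, i.e. `q₃' = -(∂²_{q₁}L) q₃ - (Dg)ᵀ q₄` and `q₄' = (Dg) q₃`.
Here `∇_{q₁}L(x,y) = ∇g₀(x) + (Dg(x))ᵀ y` is encoded by `gradL`, the Hessian
`∂²_{q₁}L` as the Fréchet derivative of `x ↦ gradL x y`, and `(Dg)ᵀ` as the adjoint of
the Fréchet derivative of `g`. -/
theorem ahu_flow_residual_dynamics {n m : ℕ}
    (g₀ : EuclideanSpace ℝ (Fin n) → ℝ)
    (g : EuclideanSpace ℝ (Fin n) → EuclideanSpace ℝ (Fin m))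
    (hg₀ : ContDiff ℝ 2 g₀) (hg : ContDiff ℝ 2 g)
    (gradL : EuclideanSpace ℝ (Fin n) → EuclideanSpace ℝ (Fin m) →
      EuclideanSpace ℝ (Fin n))
    (hgradL : ∀ x y, gradL x y =
      gradient g₀ x + ContinuousLinearMap.adjoint (fderiv ℝ g x) y)
    (q₁ : ℝ → EuclideanSpace ℝ (Fin n)) (q₂ : ℝ → EuclideanSpace ℝ (Fin m))
    (hq₁ : ∀ t, HasDerivAt q₁ (-gradL (q₁ t) (q₂ t)) t)
    (hq₂ : ∀ t, HasDerivAt q₂ (g (q₁ t)) t)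
    (q₃ : ℝ → EuclideanSpace ℝ (Fin n))
    (hq₃ : ∀ t, q₃ t = -gradL (q₁ t) (q₂ t))
    (q₄ : ℝ → EuclideanSpace ℝ (Fin m))
    (hq₄ : ∀ t, q₄ t = g (q₁ t)) :
    ∀ t : ℝ,
      HasDerivAt q₃
        (-(fderiv ℝ (fun x => gradL x (q₂ t)) (q₁ t) (q₃ t))
          - ContinuousLinearMap.adjoint (fderiv ℝ g (q₁ t)) (q₄ t)) t ∧
      HasDerivAt q₄ (fderiv ℝ g (q₁ t) (q₃ t)) t := by
  intro t
  have hgradL_fun :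
      gradL = fun x y => gradient g₀ x + ContinuousLinearMap.adjoint (fderiv ℝ g x) y :=
    funext₂ hgradL
  have hq₁' : HasDerivAt q₁ (q₃ t) t := hq₃ t ▸ hq₁ t
  have hDg : Differentiable ℝ (fderiv ℝ g) :=
    (hg.fderiv_right (by norm_num)).differentiable one_ne_zero
  constructor
  · have hflow := (HasDerivAt.add_clm_apply_comp (hg₀.differentiable_gradient le_rfl _)
      (hDg _).adjoint hq₁' (hq₂ t)).neg
    rw [sub_eq_add_neg, ← neg_add, hq₄, hgradL_fun]
    exact hflow.congr_of_eventuallyEq (.of_forall fun s => by rw [hq₃, hgradL]; rfl)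
  · exact ((hg.differentiable (by norm_num) _).hasFDerivAt.comp_hasDerivAt t hq₁')
      |>.congr_of_eventuallyEq (.of_forall hq₄)
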